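/- For all natural numbers s ≥ 1 and any integer q with gcd(q,5)=1, the sequence S defined by S(0)=0, S(1)=-q, S(i) = -q - S(i-2) - 3·S(i-1) satisfies: S(i) ≡ 0 (mod 5^s) if i ≡ 0 (mod 5^s) or i ≡ -1 (mod 5^s). -/
import Mathlib

open Nat

private lemma fib5_aux : ∀ m : ℕ,
    ((Nat.fib (5 * m) : ℤ) = 5 * (Nat.fib m : ℤ) * (Nat.fib (m+1) : ℤ)^4
        - 10 * (Nat.fib m : ℤ)^2 * (Nat.fib (m+1) : ℤ)^3
        + 20 * (Nat.fib m : ℤ)^3 * (Nat.fib (m+1) : ℤ)^2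
        - 15 * (Nat.fib m : ℤ)^4 * (Nat.fib (m+1) : ℤ)
        + 5 * (Nat.fib m : ℤ)^5)
    ∧ ((Nat.fib (5 * m + 1) : ℤ) = (Nat.fib (m+1) : ℤ)^5
        + 10 * (Nat.fib m : ℤ)^2 * (Nat.fib (m+1) : ℤ)^3
        - 10 * (Nat.fib m : ℤ)^3 * (Nat.fib (m+1) : ℤ)^2
        + 10 * (Nat.fib m : ℤ)^4 * (Nat.fib (m+1) : ℤ)
        - 3 * (Nat.fib m : ℤ)^5) := by
  intro m
  induction m with
  | zero => simp
  | succ m ih =>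
    obtain ⟨ih1, ih2⟩ := ih
    have e1 : 5 * (m + 1) = 5 * m + 4 + 1 := by ring
    have e2 : 5 * (m + 1) + 1 = 5 * m + 5 + 1 := by ring
    have f1 : Nat.fib (5 * m + 4 + 1) = Nat.fib (5*m) * Nat.fib 4 + Nat.fib (5*m+1) * Nat.fib (4+1) := Nat.fib_add _ _
    have f2 : Nat.fib (5 * m + 5 + 1) = Nat.fib (5*m) * Nat.fib 5 + Nat.fib (5*m+1) * Nat.fib (5+1) := Nat.fib_add _ _
    have fm2 : (Nat.fib (m + 2) : ℤ) = (Nat.fib m : ℤ) + (Nat.fib (m+1) : ℤ) := by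
      rw [Nat.fib_add_two]; push_cast; ring
    constructor
    · rw [e1, f1]
      push_cast
      rw [ih1, ih2, fm2]
      norm_num [Nat.fib]
      ring
    · rw [e2, f2]
      push_cast
      rw [ih1, ih2, fm2]
      norm_num [Nat.fib]
      ring

private lemma pow5_dvd_fib : ∀ s : ℕ, (5 : ℤ) ^ s ∣ (Nat.fib (5 ^ s) : ℤ) := by
  intro s
  induction s with
  | zero => simp
  | succ s ih =>
    obtain ⟨k, hk⟩ := ih
    have h5 : 5 ^ (s + 1) = 5 * 5 ^ s := by ring
    rw [h5, (fib5_aux (5 ^ s)).1, hk]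
    refine ⟨k * ((Nat.fib (5^s+1) : ℤ))^4 - 2*k*((5:ℤ)^s*k) * ((Nat.fib (5^s+1) : ℤ))^3
      + 4*k*((5:ℤ)^s*k)^2 * ((Nat.fib (5^s+1) : ℤ))^2 - 3*k*((5:ℤ)^s*k)^3 * ((Nat.fib (5^s+1) : ℤ))
      + k*((5:ℤ)^s*k)^4, ?_⟩
    ring

private lemma cassini : ∀ i : ℕ, ((Nat.fib (i+1) : ℤ))^2 - (Nat.fib (i+1) : ℤ) * (Nat.fib i : ℤ) - (Nat.fib i : ℤ)^2 = (-1)^i := by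
  intro i
  induction i with
  | zero => simp
  | succ i ih =>
    have fm2 : (Nat.fib (i + 2) : ℤ) = (Nat.fib i : ℤ) + (Nat.fib (i+1) : ℤ) := by
      rw [Nat.fib_add_two]; push_cast; ring
    rw [fm2, pow_succ]
    linear_combination (-1 : ℤ) * ih

theorem stmt19 (s : ℕ) (hs : 1 ≤ s) (q : ℤ) (hq : Int.gcd q 5 = 1)
    (S : ℕ → ℤ) (h0 : S 0 = 0) (h1 : S 1 = -q)
    (hrec : ∀ i, S (i + 2) = -q - S i - 3 * S (i + 1)) :
    ∀ i : ℕ, (i % 5 ^ s = 0 ∨ (i + 1) % 5 ^ s = 0) → ((5 : ℤ) ^ s) ∣ S i := by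
  have Sval : ∀ i : ℕ, S i = (-1)^i * q * (Nat.fib i : ℤ) * (Nat.fib (i+1) : ℤ) ∧
      S (i+1) = (-1)^(i+1) * q * (Nat.fib (i+1) : ℤ) * (Nat.fib (i+2) : ℤ) := by
    intro i
    induction i with
    | zero => simp [h0, h1]
    | succ i ih =>
      obtain ⟨ih1, ih2⟩ := ih
      refine ⟨ih2, ?_⟩
      have fm2 : (Nat.fib (i + 2) : ℤ) = (Nat.fib i : ℤ) + (Nat.fib (i+1) : ℤ) := by
        rw [Nat.fib_add_two]; push_cast; ring
      have fm3 : (Nat.fib (i + 3) : ℤ) = (Nat.fib (i+1) : ℤ) + (Nat.fib (i+2) : ℤ) := by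
        rw [show i + 3 = (i+1) + 2 from rfl, Nat.fib_add_two]; push_cast; ring
      have hc := cassini i
      rw [hrec i, ih1, ih2]
      rw [show i + 1 + 1 = i + 2 from rfl, show i + 2 + 1 = i + 3 from rfl, fm3, fm2]
      rw [pow_succ, pow_succ]
      have h2 : ((-1:ℤ)^i)^2 = 1 := by rw [← pow_mul, mul_comm, pow_mul]; norm_num
      linear_combination ((-1 : ℤ)^i * q) * hc + q * h2
  intro i hi
  have hdvd : (5:ℤ)^s ∣ (Nat.fib i : ℤ) ∨ (5:ℤ)^s ∣ (Nat.fib (i+1) : ℤ) := by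
    rcases hi with hi | hi
    · left
      have : 5 ^ s ∣ i := Nat.dvd_of_mod_eq_zero hi
      have := Nat.fib_dvd _ _ this
      exact dvd_trans (pow5_dvd_fib s) (Int.natCast_dvd_natCast.mpr this)
    · right
      have : 5 ^ s ∣ (i+1) := Nat.dvd_of_mod_eq_zero hi
      have := Nat.fib_dvd _ _ this
      exact dvd_trans (pow5_dvd_fib s) (Int.natCast_dvd_natCast.mpr this)
  rw [(Sval i).1]
  rcases hdvd with h | h
  · exact Dvd.dvd.mul_right (Dvd.dvd.mul_left h _) _
  · exact Dvd.dvd.mul_left h _
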